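/- Let [1] be the category with objects 0, 1 and unique non-identity morphism γ : 0 → 1, and let G : [1]^op × [1] ⥤ Ab be the bimodule with G(0, 1) = ℤ and all other values 0 (and all values on non-identity morphisms the zero homomorphism). Then H^0_HM([1], G) = 0, H^1_HM([1], G) ≅ ℤ, and H^n_HM([1], G) = 0 for all n ≥ 2. Consequently, for the functor f : [0] → [1] with f(0) = 0 (which admits a right adjoint), the canonical homomorphism H^1_HM([1], G) → H^1_HM([0], G ∘ (f^op × f)) is not an isomorphism. -/

import Mathlib

/- Auxiliary general constructions -/

open CategoryTheory Limits Opposite Simplicial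

universe w v u

namespace CatCohomology

section Bar

variable {A : Type u} [Category.{v} A]

/-- The group of `Δ`-cochains of a category `A` with coefficients in a bimodule
`G : Aᵒᵖ × A ⥤ Ab`: the product over all `Δ`-simplices `τ` of the nerve of `A` of
the groups `G (τ 0, τ (last))`. -/
noncomputable def barObj (G : Aᵒᵖ × A ⥤ AddCommGrpCat.{w}) (Δ : SimplexCategory) :
    AddCommGrpCat.{max u v w} :=
  AddCommGrpCat.of (∀ τ : (nerve A).obj (op Δ), G.obj (op (τ.obj 0), τ.obj (Fin.last Δ.len)))

/-- The cosimplicial abelian group of cochains on the nerve of `A` with coefficients in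
a bimodule `G : Aᵒᵖ × A ⥤ Ab`.  Its alternating coface map complex is the standard
cochain complex computing the (Hochschild-Mitchell style) cohomology of the small
category `A` with coefficients in `G`. -/
noncomputable def barCosimplicial (G : Aᵒᵖ × A ⥤ AddCommGrpCat.{w}) :
    CosimplicialObject AddCommGrpCat.{max u v w} where
  obj Δ := barObj G Δ
  map {Δ₁ Δ₂} g := AddCommGrpCat.ofHom (AddMonoidHom.mk'
    (fun φ τ => G.map ((τ.map (homOfLE (Fin.zero_le _))).op,
        τ.map (homOfLE (Fin.le_last _))) (φ ((nerve A).map g.op τ)))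
    (by intro φ ψ; funext τ; exact map_add _ _ _))
  map_id Δ := by
    ext φ τ
    show G.map ((τ.map (𝟙 (0 : Fin (Δ.len + 1)))).op, τ.map (𝟙 (Fin.last Δ.len))) (φ τ) = φ τ
    rw [τ.map_id, τ.map_id]
    show G.map (𝟙 (op (τ.obj 0), τ.obj (Fin.last Δ.len))) (φ τ) = φ τ
    rw [G.map_id]; rfl
  map_comp {Δ₁ Δ₂ Δ₃} g h := by
    ext φ τ
    show G.map _ (φ _) = G.map _ (G.map _ (φ ((nerve A).map g.op ((nerve A).map h.op τ))))
    rw [← CategoryTheory.comp_apply, ← G.map_comp]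
    apply congrFun; apply congrArg; apply congrArg; apply congrArg
    refine Prod.ext ?_ ?_
    · show (τ.map (homOfLE _)).op =
        ((((nerve A).map h.op τ).map (homOfLE _)).op ≫ (τ.map (homOfLE _)).op)
      erw [← op_comp]; apply congrArg
      show τ.map _ = τ.map _ ≫ τ.map _
      erw [← τ.map_comp]; congr 1
    · show τ.map (homOfLE _) = (((nerve A).map h.op τ).map (homOfLE _) ≫ τ.map (homOfLE _))
      show τ.map _ = τ.map _ ≫ τ.map _
      erw [← τ.map_comp]; congr 1

/-- The standard cochain complex of a small category with coefficients in a bimodule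
`G : Aᵒᵖ × A ⥤ Ab` (with the alternating sum differentials). -/
noncomputable def cochainComplex (G : Aᵒᵖ × A ⥤ AddCommGrpCat.{w}) :
    CochainComplex AddCommGrpCat.{max u v w} ℕ :=
  (AlgebraicTopology.alternatingCofaceMapComplex _).obj (barCosimplicial G)

/-- The cohomology of a small category with coefficients in a bimodule,
i.e. the Hochschild-Mitchell cohomology `H*(A, G) = Ext*(ℤA, G)` computed by the
standard cochain complex. -/
noncomputable def cohomology (G : Aᵒᵖ × A ⥤ AddCommGrpCat.{w}) (n : ℕ) :
    AddCommGrpCat.{max u v w} :=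
  (cochainComplex G).homology n

end Bar

section BarMaps

variable {A : Type u} [Category.{v} A] {B : Type u} [Category.{v} B]

/-- Restriction of cochains along a functor `f : A ⥤ B`:
the canonical map of cosimplicial abelian groups. -/
noncomputable def barRestriction (f : A ⥤ B) (G : Bᵒᵖ × B ⥤ AddCommGrpCat.{w}) :
    barCosimplicial (A := B) G ⟶ barCosimplicial (f.op.prod f ⋙ G) where
  app Δ := AddCommGrpCat.ofHom (AddMonoidHom.mk' (fun φ τ => φ (τ ⋙ f)) (by intro φ ψ; funext τ; rfl))
  naturality {Δ₁ Δ₂} g := by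
    ext φ τ
    rfl

/-- The canonical homomorphism `H^n(B, G) ⟶ H^n(A, G ∘ (fᵒᵖ × f))` on the cohomology
of small categories with coefficients in bimodules, induced by the inverse image along
`f : A ⥤ B` (restriction of cochains). -/
noncomputable def cohomologyMap (f : A ⥤ B) (G : Bᵒᵖ × B ⥤ AddCommGrpCat.{w}) (n : ℕ) :
    cohomology (A := B) G n ⟶ cohomology (f.op.prod f ⋙ G) n :=
  HomologicalComplex.homologyMap
    ((AlgebraicTopology.alternatingCofaceMapComplex _).map (barRestriction f G)) n

/-- The cohomology `H^n(A, G) = Ext^n(Δℤ, G) = lim^n G` of a small category `A` with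
coefficients in a diagram of abelian groups `G : A ⥤ Ab`, computed by the standard
cochain complex `C^n(A, G) = ∏_{a₀ → ⋯ → aₙ} G(aₙ)`. -/
noncomputable def diagCohomology (G : A ⥤ AddCommGrpCat.{w}) (n : ℕ) :
    AddCommGrpCat.{max u v w} :=
  cohomology (CategoryTheory.Prod.snd Aᵒᵖ A ⋙ G) n

/-- The canonical homomorphism `H^n(B, G) ⟶ H^n(A, G ∘ f)` for a functor `f : A ⥤ B`
and a diagram `G : B ⥤ Ab`, induced by the (exact) inverse image functor
`f^* : Ab^B ⥤ Ab^A` (restriction of cochains along `f`). -/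
noncomputable def diagCohomologyMap (f : A ⥤ B) (G : B ⥤ AddCommGrpCat.{w}) (n : ℕ) :
    diagCohomology G n ⟶ diagCohomology (f ⋙ G) n :=
  cohomologyMap f (CategoryTheory.Prod.snd Bᵒᵖ B ⋙ G) n

end BarMaps

/-- The bimodule `G` on `[1] = Fin 2` with `G (0,1) = ℤ` and all other values `0`. -/
noncomputable def Gbim : (Fin 2)ᵒᵖ × Fin 2 ⥤ AddCommGrpCat.{0} where
  obj x := if x.1.unop < x.2 then AddCommGrpCat.of ℤ else AddCommGrpCat.of PUnit
  map {x y} p :=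
    if hx : x.1.unop < x.2 then
      eqToHom ((if_pos hx).trans (if_pos
        (lt_of_le_of_lt (leOfHom p.1.unop) (lt_of_lt_of_le hx (leOfHom p.2)))).symm)
    else 0
  map_id x := by
    by_cases hx : x.1.unop < x.2
    · simp [dif_pos hx]
    · rw [dif_neg hx]
      have hz : IsZero (ite (x.1.unop < x.2) (AddCommGrpCat.of ℤ) (AddCommGrpCat.of PUnit)) := by
        rw [if_neg hx]
        exact AddCommGrpCat.isZero_of_subsingleton _
      exact (hz.eq_of_src _ _)
  map_comp {x y z} p q := by
    by_cases hx : x.1.unop < x.2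
    · have hy : y.1.unop < y.2 :=
        lt_of_le_of_lt (leOfHom p.1.unop) (lt_of_lt_of_le hx (leOfHom p.2))
      simp [dif_pos hx, dif_pos hy, eqToHom_trans]
    · simp [dif_neg hx]

/-- The functor `[0] ⥤ [1]` (i.e. `Fin 1 ⥤ Fin 2`) sending `0` to `0`. -/
def f01 : Fin 1 ⥤ Fin 2 := (monotone_const (c := (0 : Fin 2))).functor

end CatCohomology

open CatCohomology

/-! An `n`-simplex `τ` of the nerve of `[1]` contributes to the cochains with coefficients in `G`
only if `τ 0 = 0` and `τ n = 1`, i.e. if it is the simplex jumping from `0` to `1` at some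
position `k ∈ [1, n]`; so an `n`-cochain is a vector `(φ_1, …, φ_n)` of integers. The `i`-th face
of the jump at `k` is the jump at `k - 1` if `i < k` and at `k` otherwise, so the differential reads
`(dφ)_k = ε(k) φ_{k-1} + (ε(n) - ε(k)) φ_k`, where `ε(m) = m % 2` and `φ_0 = φ_{n+1} = 0`.
Hence `C⁰ = 0` and `d¹ = 0`, so `H¹ = C¹ ≅ ℤ`, and a cocycle `ψ` of degree `m + 1 ≥ 2` is the
coboundary of `j ↦ ψ_{j+1} - [j ≤ 1] ψ_1`. The bimodule `G ∘ (fᵒᵖ × f)` on `[0]` is zero, so the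
restriction map `ℤ ≅ H¹([1], G) ⟶ H¹([0], G ∘ (fᵒᵖ × f)) = 0` is not an isomorphism. -/

lemma neg_one_geom_sum_eq_mod_two (m : ℕ) :
    ∑ i ∈ Finset.range m, (-1 : ℤ) ^ i = (m % 2 : ℕ) := by
  rw [neg_one_geom_sum]
  rcases Nat.even_or_odd m with h | h
  · rw [if_pos h, Nat.even_iff.mp h, Nat.cast_zero]
  · rw [if_neg (Nat.not_even_iff_odd.mpr h), Nat.odd_iff.mp h, Nat.cast_one]

lemma sum_neg_one_pow_mul_ite {N k : ℕ} (hk : k ≤ N) (a b : ℤ) :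
    ∑ i ∈ Finset.range N, (-1 : ℤ) ^ i * (if i < k then a else b) =
      (k % 2 : ℕ) * a + ((N % 2 : ℕ) - (k % 2 : ℕ) : ℤ) * b := by
  have below : ∑ i ∈ Finset.range k, (-1 : ℤ) ^ i * (if i < k then a else b) =
      (k % 2 : ℕ) * a := by
    rw [Finset.sum_congr rfl fun i hi => by rw [if_pos (Finset.mem_range.mp hi)],
      ← Finset.sum_mul, neg_one_geom_sum_eq_mod_two]
  have above : ∑ i ∈ Finset.Ico k N, (-1 : ℤ) ^ i * (if i < k then a else b) =
      ((N % 2 : ℕ) - (k % 2 : ℕ) : ℤ) * b := by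
    rw [Finset.sum_congr rfl fun i hi => by rw [if_neg (Finset.mem_Ico.mp hi).1.not_gt],
      ← Finset.sum_mul, Finset.sum_Ico_eq_sub _ hk, neg_one_geom_sum_eq_mod_two,
      neg_one_geom_sum_eq_mod_two]
  rw [← Finset.sum_range_add_sum_Ico _ hk, below, above]

namespace CatCohomology

section General

variable {A : Type u} [Category.{v} A] (G : Aᵒᵖ × A ⥤ AddCommGrpCat.{w})

lemma cochainComplex_d_apply (n : ℕ) (φ : barObj G ⦋n⦌) (τ : (nerve A).obj (op ⦋n + 1⦌)) :
    (cochainComplex G).d n (n + 1) φ τ = ∑ i : Fin (n + 2), (-1 : ℤ) ^ (i : ℕ) •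
      G.map ((τ.map (homOfLE (Fin.zero_le _))).op, τ.map (homOfLE (Fin.le_last _)))
        (φ ((nerve A).map (SimplexCategory.δ i).op τ)) := by
  have hd : (cochainComplex G).d n (n + 1) =
      ∑ i : Fin (n + 2), (-1 : ℤ) ^ (i : ℕ) • (barCosimplicial G).δ i :=
    CochainComplex.of_d (fun n => (barCosimplicial G).obj ⦋n⦌)
      (AlgebraicTopology.AlternatingCofaceMapComplex.objD (barCosimplicial G)) n
  rw [hd]
  change AddCommGrpCat.homAddEquiv
    (∑ i : Fin (n + 2), (-1 : ℤ) ^ (i : ℕ) • (barCosimplicial G).δ i) φ τ = _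
  rw [map_sum]
  erw [AddMonoidHom.finsetSum_apply, Finset.sum_apply]
  rfl

lemma isZero_barObj (Δ : SimplexCategory)
    (h : ∀ τ : (nerve A).obj (op Δ), IsZero (G.obj (op (τ.obj 0), τ.obj (Fin.last Δ.len)))) :
    IsZero (barObj G Δ) :=
  AddCommGrpCat.isZero_iff_subsingleton.mpr
    ⟨fun _ _ => funext fun τ => (AddCommGrpCat.isZero_iff_subsingleton.mp (h τ)).elim _ _⟩

lemma isZero_cohomology_of_isZero_barObj (n : ℕ) (h : IsZero (barObj G ⦋n⦌)) :
    IsZero (cohomology G n) :=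
  ShortComplex.isZero_homology_of_isZero_X₂ _ h

end General

section JumpSimplex

def jumpSimplex (n k : ℕ) : ComposableArrows (Fin 2) n :=
  Monotone.functor (f := fun j : Fin (n + 1) => if (j : ℕ) < k then (0 : Fin 2) else 1)
    fun a b hab => by
      have := Fin.le_iff_val_le_val.mp hab
      dsimp only
      split_ifs <;> first | decide | omega

@[simp]
lemma jumpSimplex_obj (n k : ℕ) (j : Fin (n + 1)) :
    (jumpSimplex n k).obj j = if (j : ℕ) < k then 0 else 1 := rfl

lemma jumpSimplex_obj_lt_iff {n k : ℕ} :
    (jumpSimplex n k).obj 0 < (jumpSimplex n k).obj (Fin.last n) ↔ 1 ≤ k ∧ k ≤ n := by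
  simp only [jumpSimplex_obj, Fin.val_zero, Fin.val_last]
  by_cases h0 : 0 < k <;> by_cases hn : n < k <;> simp [h0, hn] <;> omega

def zeroCount {n : ℕ} (τ : ComposableArrows (Fin 2) n) : ℕ :=
  (Finset.univ.filter fun j => τ.obj j = 0).card

lemma eq_jumpSimplex_zeroCount {n : ℕ} (τ : ComposableArrows (Fin 2) n) :
    τ = jumpSimplex n (zeroCount τ) := by
  refine CategoryTheory.Functor.ext (fun j => ?_) (fun _ _ _ => Subsingleton.elim _ _)
  have hlower : ∀ a b, b ≤ a → τ.obj a = 0 → τ.obj b = 0 := fun a b hba ha =>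
    Fin.le_zero_iff.mp (ha ▸ leOfHom (τ.map (homOfLE hba)))
  have := Fin.lt_card_filter_univ_iff_apply_of_imp (j := j) _ hlower
  rw [jumpSimplex_obj, zeroCount]
  split_ifs <;> omega

lemma zeroCount_jumpSimplex {n k : ℕ} (hk : k ≤ n + 1) : zeroCount (jumpSimplex n k) = k := by
  have hfilter : (Finset.univ.filter fun j => (jumpSimplex n k).obj j = 0) =
      Finset.univ.filter fun j : Fin (n + 1) => (j : ℕ) < k :=
    Finset.filter_congr fun j _ => by rw [jumpSimplex_obj]; split_ifs <;> simp_all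
  rw [zeroCount, hfilter, Fin.card_filter_val_lt]
  omega

lemma nerve_map_δ_jumpSimplex (n k : ℕ) (i : Fin (n + 2)) :
    (nerve (Fin 2)).map (SimplexCategory.δ i).op (jumpSimplex (n + 1) k) =
      jumpSimplex n (if (i : ℕ) < k then k - 1 else k) := by
  refine CategoryTheory.Functor.ext (fun j => ?_) (fun _ _ _ => Subsingleton.elim _ _)
  change (jumpSimplex (n + 1) k).obj (i.succAbove j) = _
  rw [jumpSimplex_obj, jumpSimplex_obj]
  rcases lt_or_ge j.castSucc i with h | h
  · rw [Fin.succAbove_of_castSucc_lt _ _ h]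
    simp only [Fin.lt_def, Fin.val_castSucc] at h ⊢
    split_ifs <;> omega
  · rw [Fin.succAbove_of_le_castSucc _ _ h]
    simp only [Fin.le_def, Fin.val_castSucc, Fin.val_succ] at h ⊢
    split_ifs <;> omega

end JumpSimplex

namespace Gbim

lemma obj_eq_of_lt {x : (Fin 2)ᵒᵖ × Fin 2} (h : x.1.unop < x.2) :
    Gbim.obj x = AddCommGrpCat.of ℤ :=
  if_pos h

lemma isZero_obj {x : (Fin 2)ᵒᵖ × Fin 2} (h : ¬ x.1.unop < x.2) : IsZero (Gbim.obj x) := by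
  rw [show Gbim.obj x = AddCommGrpCat.of PUnit from if_neg h]
  exact AddCommGrpCat.isZero_of_subsingleton _

noncomputable def toInt (x : (Fin 2)ᵒᵖ × Fin 2) : Gbim.obj x →+ ℤ :=
  if h : x.1.unop < x.2 then (eqToHom (obj_eq_of_lt h)).hom else 0

noncomputable def ofInt (x : (Fin 2)ᵒᵖ × Fin 2) (m : ℤ) : Gbim.obj x :=
  if h : x.1.unop < x.2 then eqToHom (obj_eq_of_lt h).symm m else 0

lemma toInt_ofInt {x : (Fin 2)ᵒᵖ × Fin 2} (h : x.1.unop < x.2) (m : ℤ) :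
    toInt x (ofInt x m) = m := by
  rw [toInt, ofInt, dif_pos h, dif_pos h]
  change (eqToHom (obj_eq_of_lt h).symm ≫ eqToHom (obj_eq_of_lt h)) m = m
  rw [eqToHom_trans, eqToHom_refl]
  rfl

lemma toInt_injective {x : (Fin 2)ᵒᵖ × Fin 2} (h : x.1.unop < x.2) :
    Function.Injective (toInt x) := by
  rw [toInt, dif_pos h]
  exact (ConcreteCategory.bijective_of_isIso (eqToHom (obj_eq_of_lt h))).1

lemma map_comp_eqToHom {x y : (Fin 2)ᵒᵖ × Fin 2} (p : x ⟶ y) (hx : x.1.unop < x.2)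
    (hy : y.1.unop < y.2) :
    Gbim.map p ≫ eqToHom (obj_eq_of_lt hy) = eqToHom (obj_eq_of_lt hx) := by
  change (if h : x.1.unop < x.2 then eqToHom _ else 0) ≫ _ = _
  rw [dif_pos hx]
  exact eqToHom_trans _ _

lemma toInt_map {x y : (Fin 2)ᵒᵖ × Fin 2} (p : x ⟶ y) (hy : y.1.unop < y.2) (a : Gbim.obj x) :
    toInt y (Gbim.map p a) = toInt x a := by
  by_cases hx : x.1.unop < x.2
  · simp only [toInt, dif_pos hx, dif_pos hy, ← map_comp_eqToHom p hx hy]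
    rfl
  · obtain rfl : a = 0 := (AddCommGrpCat.isZero_iff_subsingleton.mp (isZero_obj hx)).elim _ _
    simp only [map_zero]

section Coordinates

variable (n : ℕ)

noncomputable def coord (k : ℕ) : barObj Gbim ⦋n⦌ →+ ℤ :=
  (toInt _).comp (Pi.evalAddMonoidHom _ (jumpSimplex n k))

lemma toInt_apply_eq_coord (φ : barObj Gbim ⦋n⦌) {k : ℕ} {τ : (nerve (Fin 2)).obj (op ⦋n⦌)}
    (hτ : τ = jumpSimplex n k) : toInt _ (φ τ) = coord n k φ := by
  subst hτ
  rfl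

lemma coord_eq_zero {k : ℕ} (hk : ¬ (1 ≤ k ∧ k ≤ n)) (φ : barObj Gbim ⦋n⦌) :
    coord n k φ = 0 := by
  change toInt _ _ = 0
  rw [toInt, dif_neg (jumpSimplex_obj_lt_iff.not.mpr hk), AddMonoidHom.zero_apply]

lemma cochain_ext {φ ψ : barObj Gbim ⦋n⦌}
    (h : ∀ k, 1 ≤ k → k ≤ n → coord n k φ = coord n k ψ) : φ = ψ := by
  funext τ
  obtain ⟨k, rfl⟩ : ∃ k, τ = jumpSimplex n k := ⟨_, eq_jumpSimplex_zeroCount τ⟩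
  by_cases hk : 1 ≤ k ∧ k ≤ n
  · exact toInt_injective (jumpSimplex_obj_lt_iff.mpr hk) (h k hk.1 hk.2)
  · exact (AddCommGrpCat.isZero_iff_subsingleton.mp
      (isZero_obj (jumpSimplex_obj_lt_iff.not.mpr hk))).elim _ _

lemma exists_coord_eq (v : ℕ → ℤ) :
    ∃ φ : barObj Gbim ⦋n⦌, ∀ k, 1 ≤ k → k ≤ n → coord n k φ = v k := by
  refine ⟨fun τ => ofInt _ (v (zeroCount τ)), fun k hk1 hk2 => ?_⟩
  change toInt _ (ofInt _ _) = _
  rw [toInt_ofInt (jumpSimplex_obj_lt_iff.mpr ⟨hk1, hk2⟩),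
    zeroCount_jumpSimplex (show k ≤ n + 1 by omega)]

lemma coord_d (φ : barObj Gbim ⦋n⦌) {k : ℕ} (hk1 : 1 ≤ k) (hk2 : k ≤ n + 1) :
    coord (n + 1) k ((cochainComplex Gbim).d n (n + 1) φ) =
      ∑ i : Fin (n + 2), (-1 : ℤ) ^ (i : ℕ) * coord n (if (i : ℕ) < k then k - 1 else k) φ := by
  change toInt _ ((cochainComplex Gbim).d n (n + 1) φ (jumpSimplex (n + 1) k)) = _
  erw [cochainComplex_d_apply, map_sum]
  refine Finset.sum_congr rfl fun i _ => ?_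
  rw [map_zsmul, toInt_map _ (jumpSimplex_obj_lt_iff.mpr ⟨hk1, hk2⟩),
    toInt_apply_eq_coord n φ (nerve_map_δ_jumpSimplex n k i), smul_eq_mul]

lemma coord_d_eq (φ : barObj Gbim ⦋n⦌) {k : ℕ} (hk1 : 1 ≤ k) (hk2 : k ≤ n + 1) :
    coord (n + 1) k ((cochainComplex Gbim).d n (n + 1) φ) =
      (k % 2 : ℕ) * coord n (k - 1) φ + ((n % 2 : ℕ) - (k % 2 : ℕ) : ℤ) * coord n k φ := by
  rw [coord_d n φ hk1 hk2,
    Fin.sum_univ_eq_sum_range (fun i => (-1 : ℤ) ^ i * coord n (if i < k then k - 1 else k) φ)]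
  simp only [apply_ite (coord n · φ)]
  rw [sum_neg_one_pow_mul_ite (by omega), Nat.add_mod_right]

end Coordinates

lemma exists_d_eq_of_d_eq_zero {m : ℕ} (hm : 1 ≤ m) (ψ : barObj Gbim ⦋m + 1⦌)
    (hψ : (cochainComplex Gbim).d (m + 1) (m + 2) ψ = 0) :
    ∃ χ : barObj Gbim ⦋m⦌, (cochainComplex Gbim).d m (m + 1) χ = ψ := by
  set c : ℕ → ℤ := fun j => coord (m + 1) j ψ with hc
  have cocycle : ∀ j, 1 ≤ j → j ≤ m + 2 →
      (j % 2 : ℕ) * c (j - 1) + (((m + 1) % 2 : ℕ) - (j % 2 : ℕ) : ℤ) * c j = 0 := by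
    intro j hj1 hj2
    rw [hc, ← coord_d_eq (m + 1) ψ hj1 hj2]
    erw [hψ, map_zero]
  have hc0 : c 0 = 0 := coord_eq_zero _ (by omega) ψ
  have hcm : c (m + 2) = 0 := coord_eq_zero _ (by omega) ψ
  obtain ⟨χ, hχ⟩ := exists_coord_eq m fun j => c (j + 1) - if j ≤ 1 then c 1 else 0
  -- the correction at `j ≤ 1` makes this hold at `j = 0` too; at `j = m + 1` it is `c (m + 2) = 0`
  have coord_χ : ∀ j ≤ m + 1, coord m j χ = c (j + 1) - if j ≤ 1 then c 1 else 0 := by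
    intro j hj
    by_cases hj' : 1 ≤ j ∧ j ≤ m
    · exact hχ j hj'.1 hj'.2
    · rw [coord_eq_zero m hj' χ]
      rcases Nat.eq_zero_or_pos j with rfl | _
      · simp
      · rw [show j = m + 1 by omega, if_neg (by omega), hcm, sub_zero]
  refine ⟨χ, cochain_ext _ fun k hk1 hk2 => ?_⟩
  rw [coord_d_eq m χ hk1 hk2, coord_χ _ (by omega), coord_χ _ hk2, Nat.sub_add_cancel hk1]
  change _ = c k
  have cocycle_one := cocycle 1 le_rfl (by omega)
  have cocycle_succ := cocycle (k + 1) (by omega) (by omega)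
  rw [Nat.sub_self, hc0, Nat.one_mod] at cocycle_one
  rw [Nat.add_sub_cancel] at cocycle_succ
  have hk' : (k + 1) % 2 = 1 - k % 2 := by omega
  have hm' : (m + 1) % 2 = 1 - m % 2 := by omega
  rw [hm'] at cocycle_one
  rw [hk', hm'] at cocycle_succ
  rcases Nat.mod_two_eq_zero_or_one k with hk | hk <;>
  rcases Nat.mod_two_eq_zero_or_one m with hm'' | hm'' <;>
  simp only [hk, hm'', Nat.cast_zero, Nat.cast_one, Nat.sub_zero, Nat.sub_self]
    at cocycle_one cocycle_succ ⊢ <;>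
  split_ifs <;> omega

lemma isZero_barObj_zero : IsZero (barObj Gbim ⦋0⦌) :=
  isZero_barObj _ _ fun _ => isZero_obj (lt_irrefl _)

lemma cochainComplex_d_zero_one : (cochainComplex Gbim).d 0 1 = 0 :=
  isZero_barObj_zero.eq_of_src _ _

lemma cochainComplex_d_one_two : (cochainComplex Gbim).d 1 2 = 0 := by
  refine AddCommGrpCat.hom_ext (AddMonoidHom.ext fun (φ : barObj Gbim ⦋1⦌) => ?_)
  refine cochain_ext 2 fun k hk1 hk2 => ?_
  rw [coord_d_eq 1 φ hk1 hk2, AddCommGrpCat.hom_zero]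
  erw [AddMonoidHom.zero_apply, map_zero]
  interval_cases k
  · simp [coord_eq_zero 1 (show ¬(1 ≤ 0 ∧ 0 ≤ 1) by omega) φ]
  · simp [coord_eq_zero 1 (show ¬(1 ≤ 2 ∧ 2 ≤ 1) by omega) φ]

noncomputable def coordOneEquiv : barObj Gbim ⦋1⦌ ≃+ ℤ :=
  AddEquiv.ofBijective (coord 1 1)
    ⟨(injective_iff_map_eq_zero _).mpr fun φ hφ => cochain_ext 1 fun k hk1 hk2 => by
        obtain rfl : k = 1 := by omega
        rw [hφ, map_zero],
      fun m => (exists_coord_eq 1 fun _ => m).imp fun _ hφ => hφ 1 le_rfl le_rfl⟩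

noncomputable def cohomologyOneIso : cohomology Gbim 1 ≅ AddCommGrpCat.of ℤ :=
  ((cochainComplex Gbim).isoHomologyπ 0 1 (by simp) cochainComplex_d_zero_one).symm ≪≫
    (cochainComplex Gbim).iCyclesIso 1 2 (by simp) cochainComplex_d_one_two ≪≫
    coordOneEquiv.toAddCommGrpIso

lemma isZero_cohomology_of_two_le {n : ℕ} (hn : 2 ≤ n) : IsZero (cohomology Gbim n) := by
  obtain ⟨m, hm, rfl⟩ : ∃ m, 1 ≤ m ∧ n = m + 1 := ⟨n - 1, by omega, by omega⟩
  rw [cohomology, ← HomologicalComplex.exactAt_iff_isZero_homology,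
    HomologicalComplex.exactAt_iff' _ m (m + 1) (m + 2) (by simp) (by simp),
    ShortComplex.ab_exact_iff]
  exact fun ψ hψ => exists_d_eq_of_d_eq_zero hm ψ hψ

end Gbim

lemma isZero_cohomology_pullback_f01 : IsZero (cohomology (f01.op.prod f01 ⋙ Gbim) 1) :=
  isZero_cohomology_of_isZero_barObj _ 1
    (isZero_barObj _ _ fun _ => Gbim.isZero_obj (x := (op 0, 0)) (lt_irrefl _))

lemma f01_isLeftAdjoint : f01.IsLeftAdjoint :=
  ⟨_, ⟨GaloisConnection.adjunction (l := fun _ : Fin 1 => (0 : Fin 2)) (u := fun _ => 0)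
    fun _ b => iff_of_true (Fin.zero_le b) (Subsingleton.elim _ _).le⟩⟩

end CatCohomology

/-- Let `[1]` be the category `0 ⟶ 1` (here `Fin 2`) and `G` the
bimodule on `[1]` with `G (0, 1) = ℤ` and all other values `0`.  Then
`H⁰_HM([1], G) = 0`, `H¹_HM([1], G) ≅ ℤ`, and `Hⁿ_HM([1], G) = 0` for `n ≥ 2`.
Consequently, for the functor `f : [0] ⥤ [1]` with `f 0 = 0` (which admits a right
adjoint), the canonical homomorphism `H¹_HM([1], G) ⟶ H¹_HM([0], G ∘ (fᵒᵖ × f))` is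
not an isomorphism. -/
theorem statement15 :
    IsZero (cohomology Gbim 0) ∧
    Nonempty (cohomology Gbim 1 ≅ AddCommGrpCat.of ℤ) ∧
    (∀ n : ℕ, 2 ≤ n → IsZero (cohomology Gbim n)) ∧
    f01.IsLeftAdjoint ∧
    ¬ IsIso (cohomologyMap f01 Gbim 1) := by
  refine ⟨isZero_cohomology_of_isZero_barObj _ 0 Gbim.isZero_barObj_zero,
    ⟨Gbim.cohomologyOneIso⟩, fun _ => Gbim.isZero_cohomology_of_two_le, f01_isLeftAdjoint,
    fun _ => ?_⟩
  have hℤ : IsZero (AddCommGrpCat.of ℤ) :=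
    (isZero_cohomology_pullback_f01.of_iso (asIso (cohomologyMap f01 Gbim 1))).of_iso
      Gbim.cohomologyOneIso.symm
  exact not_subsingleton ℤ (AddCommGrpCat.isZero_iff_subsingleton.mp hℤ)
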